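/- For n ≥ 4 with n ≡ 0 (mod 4), the graceful chromatic number of the circular ladder CL_n = C_n □ P_2 equals 5. -/

import Mathlib

/-- A graceful `k`-coloring of `G`: a proper vertex coloring with colors in
`{1, ..., k}` whose induced edge coloring `f*(uv) = |f u - f v|` is a proper
edge coloring. -/
def IsGracefulColoring {V : Type*} (G : SimpleGraph V) (k : ℕ) (f : V → ℕ) : Prop :=
  (∀ v, 1 ≤ f v ∧ f v ≤ k) ∧
  (∀ ⦃u v⦄, G.Adj u v → f u ≠ f v) ∧
  (∀ ⦃u v w⦄, G.Adj u v → G.Adj u w → v ≠ w →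
    ((f u : ℤ) - f v).natAbs ≠ ((f u : ℤ) - f w).natAbs)

/-- The graceful chromatic number: the least `k` admitting a graceful `k`-coloring. -/
noncomputable def gracefulChromaticNumber {V : Type*} (G : SimpleGraph V) : ℕ :=
  sInf {k | ∃ f : V → ℕ, IsGracefulColoring G k f}

/-- The circular ladder `CL_n = C_n □ P_2`: the closed ladder together with the
wrap-around edges `x_1 x_n` and `y_1 y_n`. -/
def circularLadder (n : ℕ) : SimpleGraph (Fin 2 × Fin n) :=
  SimpleGraph.fromRel (fun a b =>
    (a.1 = b.1 ∧ (a.2.val + 1) % n = b.2.val) ∨ (a.2 = b.2 ∧ a.1 ≠ b.1))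

namespace CLaux

def g : Fin 2 → Fin 4 → ℕ
  | 0, 0 => 1 | 0, 1 => 2 | 0, 2 => 4 | 0, 3 => 5
  | 1, 0 => 4 | 1, 1 => 5 | 1, 2 => 1 | 1, 3 => 2

def d (x y : ℕ) : ℕ := ((x:ℤ) - y).natAbs

lemma g_bounds : ∀ s a, 1 ≤ g s a ∧ g s a ≤ 5 := by decide
lemma g_proper_h : ∀ s a, g s a ≠ g s (a+1) := by decide
lemma g_proper_v : ∀ s t a, s ≠ t → g s a ≠ g t a := by decide
lemma g_diffs : ∀ (s t : Fin 2) (a : Fin 4), t ≠ s →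
  (d (g s a) (g s (a+1)) ≠ d (g s a) (g s (a-1)) ∧
   d (g s a) (g s (a+1)) ≠ d (g s a) (g t a) ∧
   d (g s a) (g s (a-1)) ≠ d (g s a) (g t a)) := by decide

variable {n : ℕ} [NeZero n]

set_option linter.unusedSectionVars false

lemma val_one (hn : 4 ≤ n) : (1 : Fin n).val = 1 := by
  rw [Fin.val_one']
  exact Nat.mod_eq_of_lt (by omega)

lemma fin_succ_val (hn : 4 ≤ n) (i : Fin n) : ((i + 1 : Fin n)).val = (i.val + 1) % n := by
  rw [Fin.add_def, val_one hn]

lemma succ_ne (hn : 4 ≤ n) (i : Fin n) : i ≠ i + 1 := by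
  intro h
  have h1 := fin_succ_val hn i
  rw [← h] at h1
  have := i.isLt
  rcases Nat.lt_or_ge (i.val + 1) n with h2 | h2
  · rw [Nat.mod_eq_of_lt h2] at h1; omega
  · have : i.val + 1 = n := by omega
    rw [this, Nat.mod_self] at h1; omega

def p (i : Fin n) : Fin 4 := ⟨i.val % 4, Nat.mod_lt _ (by norm_num)⟩

lemma p_succ (hn : 4 ≤ n) (hmod : n % 4 = 0) (i : Fin n) : p (i+1) = p i + 1 := by
  apply Fin.ext
  have h1 : ((i+1 : Fin n)).val = (i.val+1) % n := fin_succ_val hn i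
  show (i+1 : Fin n).val % 4 = (i.val % 4 + (1 : Fin 4).val) % 4
  rw [h1, show (1 : Fin 4).val = 1 from rfl]
  have := i.isLt
  rcases Nat.lt_or_ge (i.val+1) n with h | h
  · rw [Nat.mod_eq_of_lt h]; omega
  · have hin : i.val + 1 = n := by omega
    rw [hin, Nat.mod_self]; omega

lemma adj_elim (hn : 4 ≤ n) {u v : Fin 2 × Fin n}
    (h : (circularLadder n).Adj u v) :
    (u.1 = v.1 ∧ v.2 = u.2 + 1) ∨ (u.1 = v.1 ∧ u.2 = v.2 + 1) ∨ (u.2 = v.2 ∧ u.1 ≠ v.1) := by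
  rw [circularLadder, SimpleGraph.fromRel_adj] at h
  obtain ⟨hne, h | h⟩ := h
  · rcases h with ⟨h1, h2⟩ | ⟨h1, h2⟩
    · left; exact ⟨h1, Fin.ext (by rw [fin_succ_val hn, ← h2])⟩
    · right; right; exact ⟨h1, h2⟩
  · rcases h with ⟨h1, h2⟩ | ⟨h1, h2⟩
    · right; left; exact ⟨h1.symm, Fin.ext (by rw [fin_succ_val hn, ← h2])⟩
    · right; right; exact ⟨h1.symm, Ne.symm h2⟩

lemma adj_succ (hn : 4 ≤ n) (s : Fin 2) (i : Fin n) :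
    (circularLadder n).Adj (s, i) (s, i + 1) := by
  rw [circularLadder, SimpleGraph.fromRel_adj]
  refine ⟨?_, Or.inl (Or.inl ⟨rfl, (fin_succ_val hn i).symm⟩)⟩
  intro h
  exact succ_ne hn i (congrArg Prod.snd h)

lemma adj_pred (hn : 4 ≤ n) (s : Fin 2) (i : Fin n) :
    (circularLadder n).Adj (s, i) (s, i - 1) := by
  have key : (i - 1) + 1 = i := sub_add_cancel i 1
  rw [circularLadder, SimpleGraph.fromRel_adj]
  refine ⟨?_, Or.inr (Or.inl ⟨rfl, ?_⟩)⟩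
  · intro h
    have h2 : i = i - 1 := congrArg Prod.snd h
    have : i + 1 = i := by conv_lhs => rw [h2, key]
    exact succ_ne hn i this.symm
  · rw [← fin_succ_val hn (i-1), key]

lemma ne_add_one_fin2 : ∀ s : Fin 2, s ≠ s + 1 := by decide

lemma adj_vert (s : Fin 2) (i : Fin n) :
    (circularLadder n).Adj (s, i) (s + 1, i) := by
  rw [circularLadder, SimpleGraph.fromRel_adj]
  refine ⟨?_, Or.inl (Or.inr ⟨rfl, ne_add_one_fin2 s⟩)⟩
  intro h
  exact ne_add_one_fin2 s (congrArg Prod.fst h)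

lemma two_val (hn : 4 ≤ n) : (1 + 1 : Fin n).val = 2 := by
  rw [Fin.add_def, val_one hn]
  show (1 + 1) % n = 2
  exact Nat.mod_eq_of_lt (by omega)

lemma succ_ne_pred (hn : 4 ≤ n) (i : Fin n) : i + 1 ≠ i - 1 := by
  intro h
  have h2 : i + 1 + 1 = i := by rw [h, sub_add_cancel]
  have h3 : i + (1 + 1) = i + 0 := by rw [← add_assoc, h2, add_zero]
  have h4 : (1 + 1 : Fin n) = 0 := by exact add_left_cancel h3
  have := two_val hn
  rw [h4] at this
  simp at this

lemma exists_three (hn : 4 ≤ n) (u : Fin 2 × Fin n) :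
    ∃ v1 v2 v3, (circularLadder n).Adj u v1 ∧ (circularLadder n).Adj u v2 ∧
      (circularLadder n).Adj u v3 ∧ v1 ≠ v2 ∧ v1 ≠ v3 ∧ v2 ≠ v3 := by
  obtain ⟨s, i⟩ := u
  refine ⟨(s, i+1), (s, i-1), (s+1, i), adj_succ hn s i, adj_pred hn s i, adj_vert s i,
    ?_, ?_, ?_⟩
  · intro h; exact succ_ne_pred hn i (congrArg Prod.snd h)
  · intro h; exact ne_add_one_fin2 s (congrArg Prod.fst h)
  · intro h; exact ne_add_one_fin2 s (congrArg Prod.fst h)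

lemma forced (hn : 4 ≤ n) {f : Fin 2 × Fin n → ℕ}
    (hf : IsGracefulColoring (circularLadder n) 4 f) (u : Fin 2 × Fin n) :
    f u = 1 ∨ f u = 4 := by
  obtain ⟨v1, v2, v3, h1, h2, h3, h12, h13, h23⟩ := exists_three hn u
  obtain ⟨hb, hp, he⟩ := hf
  have e12 := he h1 h2 h12
  have e13 := he h1 h3 h13
  have e23 := he h2 h3 h23
  have p1 := hp h1
  have p2 := hp h2
  have p3 := hp h3
  have b0 := hb u
  have b1 := hb v1
  have b2 := hb v2
  have b3 := hb v3
  omega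

lemma not_four (hn : 4 ≤ n) : ¬ ∃ f : Fin 2 × Fin n → ℕ,
    IsGracefulColoring (circularLadder n) 4 f := by
  rintro ⟨f, hf⟩
  have hnz : (0 : Fin n) = 0 := rfl
  set u : Fin 2 × Fin n := (0, ⟨0, by omega⟩)
  obtain ⟨v1, v2, v3, h1, h2, h3, h12, h13, h23⟩ := exists_three hn u
  have fu := forced hn hf u
  have f1 := forced hn hf v1
  have f2 := forced hn hf v2
  have f3 := forced hn hf v3
  obtain ⟨hb, hp, he⟩ := hf
  have e12 := he h1 h2 h12
  have e13 := he h1 h3 h13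
  have e23 := he h2 h3 h23
  have p1 := hp h1
  have p2 := hp h2
  have p3 := hp h3
  omega

lemma fin2_eq_of_ne : ∀ (a b c : Fin 2), a ≠ c → b ≠ c → a = b := by decide

lemma fin2_add_one_of_ne : ∀ (a b : Fin 2), a ≠ b → b = a + 1 := by decide

lemma p_pred (hn : 4 ≤ n) (hmod : n % 4 = 0) {i j : Fin n} (h : i = j + 1) :
    p j = p i - 1 := by
  have : p i = p j + 1 := by rw [h, p_succ hn hmod]
  rw [this]; exact (add_sub_cancel_right _ _).symm

lemma upper (hn : 4 ≤ n) (hmod : n % 4 = 0) :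
    IsGracefulColoring (circularLadder n) 5 (fun u => g u.1 (p u.2)) := by
  refine ⟨fun v => g_bounds _ _, ?_, ?_⟩
  · intro u v huv
    rcases adj_elim hn huv with ⟨h1, h2⟩ | ⟨h1, h2⟩ | ⟨h1, h2⟩
    · simp only [h2, ← h1, p_succ hn hmod]
      exact g_proper_h _ _
    · simp only [h2, h1, p_succ hn hmod]
      exact (g_proper_h _ _).symm
    · simp only [h1]
      exact g_proper_v _ _ _ h2
  · intro u v w huv huw hvw
    show d (g u.1 (p u.2)) (g v.1 (p v.2)) ≠ d (g u.1 (p u.2)) (g w.1 (p w.2))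
    rcases adj_elim hn huv with ⟨hv1, hv2⟩ | ⟨hv1, hv2⟩ | ⟨hv1, hv2⟩ <;>
      rcases adj_elim hn huw with ⟨hw1, hw2⟩ | ⟨hw1, hw2⟩ | ⟨hw1, hw2⟩
    -- v slot1
    · exact absurd (Prod.ext (hv1.symm.trans hw1) (hv2.trans hw2.symm)) hvw
    · rw [← hv1, hv2, p_succ hn hmod, ← hw1, p_pred hn hmod hw2]
      exact (g_diffs u.1 (u.1+1) (p u.2) (ne_add_one_fin2 u.1).symm).1
    · rw [← hv1, hv2, p_succ hn hmod, ← hw1]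
      exact (g_diffs u.1 w.1 (p u.2) (Ne.symm hw2)).2.1
    -- v slot2
    · rw [← hv1, p_pred hn hmod hv2, ← hw1, hw2, p_succ hn hmod]
      exact ((g_diffs u.1 (u.1+1) (p u.2) (ne_add_one_fin2 u.1).symm).1).symm
    · exact absurd (Prod.ext (hv1.symm.trans hw1) (add_right_cancel (hv2.symm.trans hw2))) hvw
    · rw [← hv1, p_pred hn hmod hv2, ← hw1]
      exact (g_diffs u.1 w.1 (p u.2) (Ne.symm hw2)).2.2
    -- v slot3
    · rw [← hv1, ← hw1, hw2, p_succ hn hmod]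
      exact ((g_diffs u.1 v.1 (p u.2) (Ne.symm hv2)).2.1).symm
    · rw [← hv1, p_pred hn hmod hw2, ← hw1]
      exact ((g_diffs u.1 v.1 (p u.2) (Ne.symm hv2)).2.2).symm
    · exact absurd (Prod.ext (fin2_eq_of_ne _ _ _ (Ne.symm hv2) (Ne.symm hw2))
        (hv1.symm.trans hw1)) hvw

end CLaux

theorem gracefulChromaticNumber_circularLadder_of_four_dvd (n : ℕ) (hn : 4 ≤ n)
    (hmod : n % 4 = 0) :
    gracefulChromaticNumber (circularLadder n) = 5 := by
  haveI : NeZero n := ⟨by omega⟩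
  set S := {k | ∃ f : Fin 2 × Fin n → ℕ, IsGracefulColoring (circularLadder n) k f} with hS
  have h5 : 5 ∈ S := ⟨_, CLaux.upper hn hmod⟩
  have mono : ∀ k m : ℕ, k ≤ m → k ∈ S → m ∈ S := by
    rintro k m hkm ⟨f, hb, hp, he⟩
    exact ⟨f, fun v => ⟨(hb v).1, le_trans (hb v).2 hkm⟩, hp, he⟩
  show sInf S = 5
  apply le_antisymm
  · exact Nat.sInf_le h5
  · by_contra h
    push_neg at h
    have hmem : sInf S ∈ S := Nat.sInf_mem ⟨5, h5⟩
    exact CLaux.not_four hn (mono _ 4 (by omega) hmem)
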